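/- The linear polarization constant of the 2-dimensional real Euclidean space is c(ℝ²) = lim_{n→∞} c_n(ℝ²)^{1/n} = 2. -/

import Mathlib

/-!
A unit functional on `ℝ²` is `x ↦ ⟪(cos γ, sin γ), x⟫`, so a product of `n` of them at the unit
vector of angle `θ` is `∏ⱼ cos (θ - γⱼ)`, and `2 |cos (θ - γ)| = |e^{2iθ} + e^{2iγ}|` turns
`2ⁿ ∏ⱼ |cos (θ - γⱼ)|` into the modulus of the polynomial `∏ⱼ (z + e^{2iγⱼ})` on the unit circle.
By the maximum modulus principle this is at least its value `1` at `z = 0` somewhere on the circle,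
so every product of unit functionals has sup at least `2⁻ⁿ` and `cₙ ≤ 2ⁿ`. For the equally spaced
angles `γⱼ = jπ/n` the polynomial is `zⁿ - (-1)ⁿ`, of modulus at most `2`, so `cₙ ≥ 2ⁿ⁻¹`.
Hence `cₙ^{1/n} → 2`.
-/

open scoped BigOperators

/-- `sup_{‖x‖≤1} |∏ⱼ fⱼ(x)|` for functionals `f₁,…,fₙ`. -/
noncomputable def supNormProd {𝕜 X : Type*} [RCLike 𝕜] [NormedAddCommGroup X]
    [NormedSpace 𝕜 X] {n : ℕ} (f : Fin n → (X →L[𝕜] 𝕜)) : ℝ :=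
  sSup {t : ℝ | ∃ x : X, ‖x‖ ≤ 1 ∧ t = ‖∏ j, f j x‖}

/-- The n-th linear polarization constant
`cₙ(X) = 1 / inf_{f₁,…,fₙ ∈ S_{X*}} sup_{‖x‖≤1} |∏ⱼ fⱼ(x)|`. -/
noncomputable def polarizationConst (𝕜 X : Type*) [RCLike 𝕜] [NormedAddCommGroup X]
    [NormedSpace 𝕜 X] (n : ℕ) : ℝ :=
  (sInf {y : ℝ | ∃ f : Fin n → (X →L[𝕜] 𝕜), (∀ j, ‖f j‖ = 1) ∧ y = supNormProd f})⁻¹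

section PolarizationConst

variable {𝕜 X : Type*} [RCLike 𝕜] [NormedAddCommGroup X] [NormedSpace 𝕜 X] {n : ℕ}

theorem norm_prod_apply_le_supNormProd {f : Fin n → (X →L[𝕜] 𝕜)} (hf : ∀ j, ‖f j‖ ≤ 1)
    {x : X} (hx : ‖x‖ ≤ 1) : ‖∏ j, f j x‖ ≤ supNormProd f := by
  refine le_csSup ⟨1, ?_⟩ ⟨x, hx, rfl⟩
  rintro t ⟨y, hy, rfl⟩
  rw [norm_prod]
  refine Finset.prod_le_one (fun j _ => norm_nonneg _) fun j _ => ?_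
  exact (f j).le_of_opNorm_le_of_le (hf j) hy |>.trans_eq (one_mul 1)

theorem supNormProd_le {f : Fin n → (X →L[𝕜] 𝕜)} {C : ℝ}
    (h : ∀ x : X, ‖x‖ ≤ 1 → ‖∏ j, f j x‖ ≤ C) : supNormProd f ≤ C :=
  csSup_le ⟨_, 0, norm_zero.le.trans zero_le_one, rfl⟩ fun _ ⟨x, hx, ht⟩ => ht ▸ h x hx

theorem polarizationConst_le {c : ℝ} (hc : 0 < c)
    (h : ∀ f : Fin n → (X →L[𝕜] 𝕜), (∀ j, ‖f j‖ = 1) → c ≤ supNormProd f) :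
    polarizationConst 𝕜 X n ≤ c⁻¹ := by
  rw [polarizationConst]
  rcases Set.eq_empty_or_nonempty
    {y : ℝ | ∃ f : Fin n → (X →L[𝕜] 𝕜), (∀ j, ‖f j‖ = 1) ∧ y = supNormProd f} with hA | hA
  · rw [hA, Real.sInf_empty, inv_zero]
    exact (inv_pos.2 hc).le
  · exact inv_anti₀ hc (le_csInf hA fun _ ⟨f, hf, hy⟩ => hy ▸ h f hf)

theorem inv_le_polarizationConst {c C : ℝ} (hc : 0 < c)
    (h : ∀ f : Fin n → (X →L[𝕜] 𝕜), (∀ j, ‖f j‖ = 1) → c ≤ supNormProd f)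
    (f₀ : Fin n → (X →L[𝕜] 𝕜)) (hf₀ : ∀ j, ‖f₀ j‖ = 1) (hC : supNormProd f₀ ≤ C) :
    C⁻¹ ≤ polarizationConst 𝕜 X n := by
  set A := {y : ℝ | ∃ f : Fin n → (X →L[𝕜] 𝕜), (∀ j, ‖f j‖ = 1) ∧ y = supNormProd f}
  have hlower : ∀ y ∈ A, c ≤ y := fun _ ⟨f, hf, hy⟩ => hy ▸ h f hf
  have hf₀A : supNormProd f₀ ∈ A := ⟨f₀, hf₀, rfl⟩
  have hpos : 0 < sInf A := hc.trans_le (le_csInf ⟨_, hf₀A⟩ hlower)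
  exact inv_anti₀ hpos ((csInf_le ⟨c, hlower⟩ hf₀A).trans hC)

end PolarizationConst

open Filter Topology

theorem tendsto_rpow_one_div_of_le_of_le {x : ℕ → ℝ} {a c C : ℝ} (ha : 0 ≤ a) (hc : 0 < c)
    (hC : 0 < C) (hlow : ∀ᶠ n in atTop, c * a ^ n ≤ x n) (hup : ∀ᶠ n in atTop, x n ≤ C * a ^ n) :
    Tendsto (fun n : ℕ => x n ^ (1 / (n : ℝ))) atTop (𝓝 a) := by
  have hlim : ∀ b : ℝ, 0 < b →
      Tendsto (fun n : ℕ => (b * a ^ n) ^ (1 / (n : ℝ))) atTop (𝓝 a) := by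
    intro b hb
    have hroot : Tendsto (fun n : ℕ => b ^ (1 / (n : ℝ))) atTop (𝓝 1) := by
      simpa [Function.comp_def] using ((Real.continuousAt_const_rpow hb.ne').tendsto.comp
        (tendsto_one_div_atTop_nhds_zero_nat (𝕜 := ℝ)))
    have hmul : Tendsto (fun n : ℕ => b ^ (1 / (n : ℝ)) * a) atTop (𝓝 a) := by
      simpa using hroot.mul_const a
    refine hmul.congr' ?_
    filter_upwards [eventually_ne_atTop 0] with n hn
    rw [Real.mul_rpow hb.le (by positivity), one_div, Real.pow_rpow_inv_natCast ha hn]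
  refine tendsto_of_tendsto_of_tendsto_of_le_of_le' (hlim c hc) (hlim C hC) ?_ ?_
  · filter_upwards [hlow] with n hn
    exact Real.rpow_le_rpow (by positivity) hn (by positivity)
  · filter_upwards [hlow, hup] with n hl hu
    exact Real.rpow_le_rpow (hl.trans' (by positivity)) hu (by positivity)

section UnitCircle

open Complex Real Finset Metric

theorem Complex.exists_norm_eq_one_norm_apply_zero_le {F : Type*} [NormedAddCommGroup F]
    [NormedSpace ℂ F] {f : ℂ → F} (hf : Differentiable ℂ f) :
    ∃ z : ℂ, ‖z‖ = 1 ∧ ‖f 0‖ ≤ ‖f z‖ := by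
  obtain ⟨z, hz, hmax⟩ := exists_mem_frontier_isMaxOn_norm (f := f) (U := ball 0 1)
    isBounded_ball ⟨0, mem_ball_self one_pos⟩ hf.diffContOnCl
  rw [frontier_ball 0 one_ne_zero, mem_sphere_zero_iff_norm] at hz
  refine ⟨z, hz, hmax ?_⟩
  rw [closure_ball 0 one_ne_zero]
  exact mem_closedBall_self zero_le_one

theorem two_mul_abs_cos_sub (θ a : ℝ) :
    2 * |Real.cos (θ - a)| = ‖exp (2 * θ * I) + exp (2 * a * I)‖ := by
  have h : exp (2 * θ * I) + exp (2 * a * I) =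
      exp ((θ + a : ℝ) * I) * (2 * Real.cos (θ - a)) := by
    push_cast
    rw [Complex.cos, mul_div_cancel₀ _ two_ne_zero, mul_add, ← Complex.exp_add,
      ← Complex.exp_add]
    ring_nf
  rw [h, norm_mul, norm_exp_ofReal_mul_I, one_mul, norm_mul, Complex.norm_ofNat,
    Complex.norm_real, Real.norm_eq_abs]

theorem exists_one_le_prod_two_mul_abs_cos_sub {ι : Type*} (s : Finset ι) (a : ι → ℝ) :
    ∃ θ : ℝ, 1 ≤ ∏ i ∈ s, 2 * |Real.cos (θ - a i)| := by
  obtain ⟨z, hz, hle⟩ := exists_norm_eq_one_norm_apply_zero_le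
    (f := fun z => ∏ i ∈ s, (z + exp (2 * a i * I))) (by fun_prop)
  refine ⟨arg z / 2, ?_⟩
  have hz_exp : exp (2 * (arg z / 2 : ℝ) * I) = z := by
    have h := norm_mul_exp_arg_mul_I z
    rw [hz, Complex.ofReal_one, one_mul] at h
    push_cast
    rwa [mul_div_cancel₀ _ two_ne_zero]
  calc (1 : ℝ) = ‖∏ i ∈ s, ((0 : ℂ) + exp (2 * a i * I))‖ := by
        simp only [zero_add, norm_prod, ← Complex.ofReal_ofNat, ← Complex.ofReal_mul,
          norm_exp_ofReal_mul_I, prod_const_one]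
    _ ≤ ‖∏ i ∈ s, (z + exp (2 * a i * I))‖ := hle
    _ = ∏ i ∈ s, 2 * |Real.cos (arg z / 2 - a i)| := by
        simp only [norm_prod, two_mul_abs_cos_sub, hz_exp]

theorem IsPrimitiveRoot.prod_range_add_pow {R : Type*} [CommRing R] [IsDomain R] {n : ℕ}
    (hn : 0 < n) {ζ : R} (hζ : IsPrimitiveRoot ζ n) (y : R) :
    ∏ j ∈ range n, (y + ζ ^ j) = y ^ n - (-1) ^ n := by
  have h := congrArg (Polynomial.eval y) (X_pow_sub_C_eq_prod hζ hn (α := -1) rfl)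
  simpa only [Polynomial.eval_sub, Polynomial.eval_pow, Polynomial.eval_X, Polynomial.eval_C,
    Polynomial.eval_prod, mul_neg_one, sub_neg_eq_add] using h.symm

theorem prod_two_mul_abs_cos_sub_le_two {n : ℕ} (hn : 0 < n) (θ : ℝ) :
    ∏ j ∈ range n, 2 * |Real.cos (θ - j * π / n)| ≤ 2 := by
  have hpow : ∀ j : ℕ, exp (2 * ((j * π / n : ℝ) : ℂ) * I) = exp (2 * π * I / n) ^ j := by
    intro j
    rw [← Complex.exp_nat_mul]
    congr 1
    push_cast
    field_simp
  have hy : ‖exp (2 * θ * I)‖ = 1 := by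
    rw [← Complex.ofReal_ofNat, ← Complex.ofReal_mul, norm_exp_ofReal_mul_I]
  simp only [two_mul_abs_cos_sub, hpow, ← norm_prod,
    (isPrimitiveRoot_exp n hn.ne').prod_range_add_pow hn]
  calc ‖exp (2 * θ * I) ^ n - (-1) ^ n‖ ≤ ‖exp (2 * θ * I) ^ n‖ + ‖(-1 : ℂ) ^ n‖ :=
        norm_sub_le _ _
    _ = 2 := by rw [norm_pow, norm_pow, hy, norm_neg, norm_one, one_pow]; norm_num

end UnitCircle

section EuclideanPlane

open Complex Real Finset
open scoped InnerProductSpace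

local notation "ℝ²" => EuclideanSpace ℝ (Fin 2)

noncomputable def cosSin (θ : ℝ) : ℝ² :=
  Complex.orthonormalBasisOneI.repr (exp (θ * I))

theorem norm_cosSin (θ : ℝ) : ‖cosSin θ‖ = 1 := by
  rw [cosSin, LinearIsometryEquiv.norm_map, norm_exp_ofReal_mul_I]

theorem inner_cosSin_cosSin (α β : ℝ) : ⟪cosSin α, cosSin β⟫_ℝ = Real.cos (β - α) := by
  rw [cosSin, cosSin, LinearIsometryEquiv.inner_map_map, Complex.inner, ← exp_conj,
    ← Complex.exp_add, map_mul, conj_ofReal, conj_I, mul_neg, ← sub_eq_add_neg, ← sub_mul,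
    ← Complex.ofReal_sub, exp_ofReal_mul_I_re]

theorem exists_eq_norm_smul_cosSin (x : ℝ²) : ∃ φ : ℝ, x = ‖x‖ • cosSin φ := by
  set z := Complex.orthonormalBasisOneI.repr.symm x
  refine ⟨arg z, ?_⟩
  have hz : ‖z‖ = ‖x‖ := LinearIsometryEquiv.norm_map _ x
  rw [cosSin, ← hz, ← LinearIsometryEquiv.map_smul, Complex.real_smul, norm_mul_exp_arg_mul_I,
    LinearIsometryEquiv.apply_symm_apply]

theorem exists_apply_eq_inner_cosSin (f : ℝ² →L[ℝ] ℝ) (hf : ‖f‖ = 1) :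
    ∃ γ : ℝ, ∀ x, f x = ⟪cosSin γ, x⟫_ℝ := by
  set u := (InnerProductSpace.toDual ℝ ℝ²).symm f
  obtain ⟨γ, hγ⟩ := exists_eq_norm_smul_cosSin u
  have hu : ‖u‖ = 1 := by rw [LinearIsometryEquiv.norm_map, hf]
  rw [hu, one_smul] at hγ
  refine ⟨γ, fun x => ?_⟩
  rw [← hγ, InnerProductSpace.toDual_symm_apply]

theorem inv_two_pow_le_supNormProd {n : ℕ} (f : Fin n → (ℝ² →L[ℝ] ℝ)) (hf : ∀ j, ‖f j‖ = 1) :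
    (2 ^ n : ℝ)⁻¹ ≤ supNormProd f := by
  choose γ hγ using fun j => exists_apply_eq_inner_cosSin (f j) (hf j)
  obtain ⟨θ, hθ⟩ := exists_one_le_prod_two_mul_abs_cos_sub univ γ
  rw [prod_mul_distrib, prod_const, card_univ, Fintype.card_fin,
    ← inv_le_iff_one_le_mul₀' (by positivity)] at hθ
  refine hθ.trans (le_of_eq_of_le ?_
    (norm_prod_apply_le_supNormProd (fun j => (hf j).le) (norm_cosSin θ).le))
  simp only [norm_prod, hγ, inner_cosSin_cosSin, Real.norm_eq_abs]

theorem norm_toDual_cosSin (θ : ℝ) :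
    ‖(InnerProductSpace.toDual ℝ ℝ² (cosSin θ) : ℝ² →L[ℝ] ℝ)‖ = 1 := by
  rw [LinearIsometryEquiv.norm_map, norm_cosSin]

theorem supNormProd_toDual_cosSin_le {n : ℕ} (hn : 0 < n) :
    supNormProd (fun j : Fin n =>
      (InnerProductSpace.toDual ℝ ℝ² (cosSin (j * π / n)) : ℝ² →L[ℝ] ℝ)) ≤ 2 / 2 ^ n := by
  refine supNormProd_le fun x hx => ?_
  obtain ⟨φ, hφ⟩ := exists_eq_norm_smul_cosSin x
  have hcos : ∏ j : Fin n, |Real.cos (φ - j * π / n)| ≤ 2 / 2 ^ n := by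
    have h := prod_two_mul_abs_cos_sub_le_two hn φ
    rwa [prod_mul_distrib, prod_const, card_range, ← le_div_iff₀' (by positivity),
      ← Fin.prod_univ_eq_prod_range (fun j => |Real.cos (φ - j * π / n)|)] at h
  calc ‖∏ j : Fin n, InnerProductSpace.toDual ℝ ℝ² (cosSin (j * π / n)) x‖
      = ‖x‖ ^ n * ∏ j : Fin n, |Real.cos (φ - j * π / n)| := by
        conv_lhs => rw [hφ]
        simp only [InnerProductSpace.toDual_apply_apply, inner_smul_right, inner_cosSin_cosSin,
          norm_prod, norm_mul, abs_pow, abs_norm, prod_mul_distrib, prod_const, card_univ,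
          Fintype.card_fin, Real.norm_eq_abs]
    _ ≤ 1 * (2 / 2 ^ n) := by gcongr; exact pow_le_one₀ (norm_nonneg x) hx
    _ = 2 / 2 ^ n := one_mul _

theorem polarizationConst_euclideanPlane_le (n : ℕ) : polarizationConst ℝ ℝ² n ≤ 2 ^ n := by
  simpa using polarizationConst_le (by positivity) inv_two_pow_le_supNormProd

theorem le_polarizationConst_euclideanPlane {n : ℕ} (hn : 0 < n) :
    2⁻¹ * 2 ^ n ≤ polarizationConst ℝ ℝ² n := by
  have h := inv_le_polarizationConst (by positivity) inv_two_pow_le_supNormProd _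
    (fun _ => norm_toDual_cosSin _) (supNormProd_toDual_cosSin_le hn)
  rwa [inv_div, div_eq_inv_mul] at h

end EuclideanPlane

/-- The linear polarization constant of the Euclidean plane:
`c(ℝ²) = lim_{n→∞} cₙ(ℝ²)^{1/n} = 2`. -/
theorem polarizationConst_limit_euclidean_plane :
    Filter.Tendsto
      (fun n : ℕ => polarizationConst ℝ (EuclideanSpace ℝ (Fin 2)) n ^ (1 / (n : ℝ)))
      Filter.atTop (nhds 2) := by
  refine tendsto_rpow_one_div_of_le_of_le zero_le_two (inv_pos.2 two_pos) one_pos ?_ ?_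
  · filter_upwards [eventually_gt_atTop 0] with n hn
    exact le_polarizationConst_euclideanPlane hn
  · filter_upwards with n
    rw [one_mul]
    exact polarizationConst_euclideanPlane_le n
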